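/- Let y ∈ ℝⁿ, t > 0, ω ≥ 0, K ≥ 0 and α ∈ (0,1]. Suppose |v(z) − w(z)| ≤ ω at the two points z = y and z = y + t^{1/2} e, that w is differentiable at y, and that w(y + t^{1/2} e) ≤ w(y) + t^{1/2} ∇w(y)·e + K t^{(1+α)/2}. Then every subgradient p ∈ ∂v(y) satisfies (p − ∇w(y))·e ≤ K t^{α/2} + 2 ω t^{−1/2}. In particular, if ω ≤ t^{(1+α)/2}, then (p − ∇w(y))·e ≤ (K + 2) t^{α/2}. -/

import Mathlib

open MeasureTheory Set Metric Filter Topology NNReal InnerProductSpace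

noncomputable section

abbrev Euc (n : ℕ) := EuclideanSpace ℝ (Fin n)

/-- The subdifferential of a function `u : ℝⁿ → ℝ` at `x`. -/
def subdiff {n : ℕ} (u : Euc n → ℝ) (x : Euc n) : Set (Euc n) :=
  {p | ∀ z, u x + ⟪p, z - x⟫_ℝ ≤ u z}

/-- The last coordinate `xⁿ` of a point of `ℝⁿ` (junk value `0` if `n = 0`). -/
def lastCoord {n : ℕ} (y : Euc n) : ℝ :=
  if h : 0 < n then y ⟨n - 1, Nat.sub_lt h one_pos⟩ else 0

/-- The first `n - 1` coordinates `x'` of a point of `ℝⁿ`. -/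
def initCoords {n : ℕ} (y : Euc n) : Euc (n - 1) :=
  WithLp.toLp 2 fun i => y (Fin.castLE (Nat.sub_le n 1) i)

/-- The `n`-th standard basis vector `eₙ` of `ℝⁿ` (junk value `0` if `n = 0`). -/
def en (n : ℕ) : Euc n :=
  if h : 0 < n then EuclideanSpace.single ⟨n - 1, Nat.sub_lt h one_pos⟩ 1 else 0

/-- Inside the ball `B_r(x₀)`, and in the orthonormal coordinates given by the linear
isometry `φ` centred at `x₀`, the set `S` coincides with the graph `{xⁿ = γ(x')}`. -/
def IsGraphNear {n : ℕ} (S : Set (Euc n)) (x₀ : Euc n) (r : ℝ)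
    (φ : Euc n ≃ₗᵢ[ℝ] Euc n) (γ : Euc (n - 1) → ℝ) : Prop :=
  ∀ x ∈ ball x₀ r,
    (x ∈ S ↔ lastCoord (φ (x - x₀)) = γ (initCoords (φ (x - x₀))))

/-- Near `x₀`, inside `Ω`, the set `S` is the graph of a `C¹` function of `n - 1`
variables, in suitable orthonormal coordinates. -/
def C1GraphAt {n : ℕ} (S Ω : Set (Euc n)) (x₀ : Euc n) : Prop :=
  ∃ r > 0, ball x₀ r ⊆ Ω ∧ ∃ (φ : Euc n ≃ₗᵢ[ℝ] Euc n) (γ : Euc (n - 1) → ℝ),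
    ContDiff ℝ 1 γ ∧ IsGraphNear S x₀ r φ γ

/-- Near `x₀`, inside `Ω`, the set `S` is the graph of a `C¹` function of `n - 1`
variables whose gradient is `α`-Hölder continuous, in suitable orthonormal coordinates. -/
def C1AlphaGraphAt {n : ℕ} (S Ω : Set (Euc n)) (α : ℝ) (x₀ : Euc n) : Prop :=
  ∃ r > 0, ball x₀ r ⊆ Ω ∧ ∃ (φ : Euc n ≃ₗᵢ[ℝ] Euc n) (γ : Euc (n - 1) → ℝ),
    ContDiff ℝ 1 γ ∧
    (∃ C : ℝ≥0, HolderWith C α.toNNReal fun z => fderiv ℝ γ z) ∧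
    IsGraphNear S x₀ r φ γ

/-- Near `x₀`, inside `Ω`, the set `S` is the graph of a `C²` function of `n - 1`
variables whose second derivatives are `α`-Hölder continuous. -/
def C2AlphaGraphAt {n : ℕ} (S Ω : Set (Euc n)) (α : ℝ) (x₀ : Euc n) : Prop :=
  ∃ r > 0, ball x₀ r ⊆ Ω ∧ ∃ (φ : Euc n ≃ₗᵢ[ℝ] Euc n) (γ : Euc (n - 1) → ℝ),
    ContDiff ℝ 2 γ ∧
    (∃ C : ℝ≥0, HolderWith C α.toNNReal fun z => fderiv ℝ (fun w => fderiv ℝ γ w) z) ∧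
    IsGraphNear S x₀ r φ γ

/-- `Ω` has a `C^{1,1}` boundary, locally a graph on scale `D⁻¹` of a `C¹` function
whose gradient is `D`-Lipschitz. -/
def HasC11BoundaryWith {n : ℕ} (Ω : Set (Euc n)) (D : ℝ) : Prop :=
  ∀ x₀ ∈ frontier Ω, ∃ r : ℝ, D⁻¹ ≤ r ∧
    ∃ (φ : Euc n ≃ₗᵢ[ℝ] Euc n) (γ : Euc (n - 1) → ℝ),
      ContDiff ℝ 1 γ ∧ LipschitzWith (Real.toNNReal D) (fun z => fderiv ℝ γ z) ∧
      IsGraphNear (frontier Ω) x₀ r φ γ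

/-- `Ω` has a `C^{1,1}` boundary. -/
def HasC11Boundary {n : ℕ} (Ω : Set (Euc n)) : Prop :=
  ∃ D > 0, HasC11BoundaryWith Ω D

end

/-- (The basic estimate behind Lemma 4.4.) If two convex functions `v, w`
are `ω`-close at `y` and at `y + t^{1/2} e`, `w` is differentiable at `y` with an almost
`C^{1,α}` one-sided expansion in direction `e`, then every subgradient of `v` at `y` is
close to `∇w(y)` in direction `e`. -/
theorem subgradient_close_of_C0_close
    {n : ℕ} (v w : Euc n → ℝ) (hv : ConvexOn ℝ univ v) (hw : ConvexOn ℝ univ w)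
    (e : Euc n) (he : ‖e‖ = 1) (y : Euc n) (t ω K α : ℝ)
    (ht : 0 < t) (hω : 0 ≤ ω) (hK : 0 ≤ K) (hα : α ∈ Set.Ioc (0 : ℝ) 1)
    (h1 : |v y - w y| ≤ ω)
    (h2 : |v (y + Real.sqrt t • e) - w (y + Real.sqrt t • e)| ≤ ω)
    (hwd : DifferentiableAt ℝ w y)
    (h3 : w (y + Real.sqrt t • e) ≤
      w y + Real.sqrt t * ⟪gradient w y, e⟫_ℝ + K * t ^ ((1 + α) / 2)) :
    ∀ p ∈ subdiff v y,
      ⟪p - gradient w y, e⟫_ℝ ≤ K * t ^ (α / 2) + 2 * ω * t ^ (-(1 : ℝ) / 2) ∧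
      (ω ≤ t ^ ((1 + α) / 2) → ⟪p - gradient w y, e⟫_ℝ ≤ (K + 2) * t ^ (α / 2)) := by
  intro p hp
  set s := Real.sqrt t with hs
  have hspos : 0 < s := Real.sqrt_pos.mpr ht
  have hsr : s = t ^ ((1:ℝ)/2) := Real.sqrt_eq_rpow t
  set z := y + s • e with hz
  have hsub := hp z
  have hzy : z - y = s • e := by simp [hz]
  have hinner : ⟪p, z - y⟫_ℝ = s * ⟪p, e⟫_ℝ := by
    rw [hzy, real_inner_smul_right]
  -- chain of inequalities
  have hvz : v z ≤ w z + ω := by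
    have := (abs_le.mp h2).2; linarith
  have hvy : w y - ω ≤ v y := by
    have := (abs_le.mp h1).1; linarith
  have key : s * ⟪p - gradient w y, e⟫_ℝ ≤ K * t ^ ((1 + α) / 2) + 2 * ω := by
    rw [inner_sub_left]
    have h4 : v y + s * ⟪p, e⟫_ℝ ≤ v z := by rw [← hinner]; exact hsub
    have : s * ⟪p, e⟫_ℝ ≤ s * ⟪gradient w y, e⟫_ℝ + K * t ^ ((1 + α) / 2) + 2 * ω := by
      have := h3; nlinarith
    ring_nf
    ring_nf at this
    linarith
  have hdiv : ⟪p - gradient w y, e⟫_ℝ ≤ (K * t ^ ((1 + α) / 2) + 2 * ω) / s :=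
    (le_div_iff₀' hspos).mpr key
  have hpow1 : t ^ ((1 + α) / 2) / s = t ^ (α / 2) := by
    rw [hsr, ← Real.rpow_sub ht]
    norm_num
    ring_nf
  have hpow2 : (1:ℝ) / s = t ^ (-(1:ℝ)/2) := by
    rw [hsr, one_div, ← Real.rpow_neg ht.le]
    norm_num
  have heq : (K * t ^ ((1 + α) / 2) + 2 * ω) / s
      = K * t ^ (α / 2) + 2 * ω * t ^ (-(1:ℝ)/2) := by
    rw [div_eq_iff hspos.ne']
    rw [add_mul, mul_assoc, mul_assoc]
    congr 1
    · congr 1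
      rw [← hpow1, div_mul_cancel₀ _ hspos.ne']
    · rw [← hpow2]
      field_simp
  have main : ⟪p - gradient w y, e⟫_ℝ ≤ K * t ^ (α / 2) + 2 * ω * t ^ (-(1:ℝ)/2) := by
    rw [← heq]; exact hdiv
  refine ⟨main, fun hω' => ?_⟩
  have h2w : 2 * ω * t ^ (-(1:ℝ)/2) ≤ 2 * t ^ (α / 2) := by
    have hne : 0 < t ^ (-(1:ℝ)/2) := Real.rpow_pos_of_pos ht _
    have : ω * t ^ (-(1:ℝ)/2) ≤ t ^ ((1 + α) / 2) * t ^ (-(1:ℝ)/2) :=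
      mul_le_mul_of_nonneg_right hω' hne.le
    have heq2 : t ^ ((1 + α) / 2) * t ^ (-(1:ℝ)/2) = t ^ (α / 2) := by
      rw [← Real.rpow_add ht]; ring_nf
    nlinarith
  calc ⟪p - gradient w y, e⟫_ℝ ≤ K * t ^ (α / 2) + 2 * ω * t ^ (-(1:ℝ)/2) := main
    _ ≤ K * t ^ (α / 2) + 2 * t ^ (α / 2) := by linarith
    _ = (K + 2) * t ^ (α / 2) := by ring
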